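/- The degree polynomial ∑_u x^{in(u)} y^{out(u)} of the Hochschild lattice of size n ≥ 2 equals (x+y)^{n−2} · (x² + (n+1)xy + y²), where in(u) and out(u) are the numbers of elements covered by and covering u. -/
import Mathlib


open MvPolynomial

def IsTriword {n : ℕ} (u : Fin n → Fin 3) : Prop :=
  (∀ i : Fin n, (i : ℕ) = 0 → u i ≠ 2) ∧
  ∀ i j : Fin n, i < j → u i = 0 → u j ≠ 1

instance {n : ℕ} : DecidablePred (@IsTriword n) := fun u => by
  unfold IsTriword; infer_instance

abbrev Triword (n : ℕ) := {u : Fin n → Fin 3 // IsTriword u}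


namespace HP

variable {n : ℕ}

/-- positions where an up-cover move exists -/
def UpE (u : Fin n → Fin 3) (j : Fin n) : Prop :=
  u j ≠ 2 ∧ ¬(u j = 1 ∧ (j : ℕ) = 0)

/-- positions where a down-cover move exists -/
def DnE (u : Fin n → Fin 3) (j : Fin n) : Prop :=
  u j = 2 ∨ (u j = 1 ∧ ∀ k, j < k → u k ≠ 1)

instance (u : Fin n → Fin 3) : DecidablePred (UpE u) := fun j => by
  unfold UpE; infer_instance

instance (u : Fin n → Fin 3) : DecidablePred (DnE u) := fun j => by
  unfold DnE; infer_instance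

def tval (u : Fin n → Fin 3) (j : Fin n) : Fin 3 :=
  if u j = 0 ∧ ∀ i, i < j → u i ≠ 0 then 1 else 2

def sval (u : Fin n → Fin 3) (j : Fin n) : Fin 3 :=
  if u j = 2 ∧ ∀ i, i < j → u i ≠ 0 then 1 else 0

lemma fin3_cases (a : Fin 3) : a = 0 ∨ a = 1 ∨ a = 2 := by omega

lemma fin3_lt_two {a : Fin 3} (h : a ≠ 2) : a < 2 := by omega

lemma tval_gt {u : Fin n → Fin 3} {j : Fin n} (h : u j ≠ 2) : u j < tval u j := by
  unfold tval; split
  · next hc => rw [hc.1]; decide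
  · exact fin3_lt_two h

lemma up_lt {u : Fin n → Fin 3} {j : Fin n} (h : u j ≠ 2) :
    u < Function.update u j (tval u j) := by
  rw [Pi.lt_def]
  refine ⟨fun k => ?_, j, ?_⟩
  · rcases eq_or_ne k j with rfl | hk
    · rw [Function.update_self]; exact (tval_gt h).le
    · rw [Function.update_of_ne hk]
  · rw [Function.update_self]; exact tval_gt h

lemma up_triword {u : Fin n → Fin 3} (hu : IsTriword u) {j : Fin n} (hj : UpE u j) :
    IsTriword (Function.update u j (tval u j)) := by
  unfold tval
  split
  · next hc =>
    constructor
    · intro i hi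
      rcases eq_or_ne i j with rfl | hij
      · rw [Function.update_self]; decide
      · rw [Function.update_of_ne hij]; exact hu.1 i hi
    · intro i k hik hi0
      rcases eq_or_ne i j with rfl | hij
      · rw [Function.update_self] at hi0; exact absurd hi0 (by decide)
      · rw [Function.update_of_ne hij] at hi0
        rcases eq_or_ne k j with rfl | hkj
        · exact absurd hi0 (hc.2 i hik)
        · rw [Function.update_of_ne hkj]; exact hu.2 i k hik hi0
  · next hc =>
    constructor
    · intro i hi
      rcases eq_or_ne i j with rfl | hij
      · -- j has val 0; then u j ≠ 2, u j ≠ 1 (from UpE since val 0), so u j = 0,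
        -- and no i < j, so hc fails
        exfalso
        rcases fin3_cases (u i) with h0 | h1 | h2
        · exact hc ⟨h0, fun k hk => absurd (Fin.lt_iff_val_lt_val.1 hk) (by omega)⟩
        · exact hj.2 ⟨h1, hi⟩
        · exact hj.1 h2
      · rw [Function.update_of_ne hij]; exact hu.1 i hi
    · intro i k hik hi0
      rcases eq_or_ne i j with rfl | hij
      · rw [Function.update_self] at hi0; exact absurd hi0 (by decide)
      · rw [Function.update_of_ne hij] at hi0
        rcases eq_or_ne k j with rfl | hkj
        · rw [Function.update_self]; decide
        · rw [Function.update_of_ne hkj]; exact hu.2 i k hik hi0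

lemma up_mid {u : Fin n → Fin 3} (hu : IsTriword u) {j : Fin n} {v : Fin n → Fin 3}
    (hv : IsTriword v) (h1 : u ≤ v) (h2 : v ≤ Function.update u j (tval u j)) :
    v = u ∨ v = Function.update u j (tval u j) := by
  have hoff : ∀ k, k ≠ j → v k = u k := by
    intro k hk
    have := h2 k
    rw [Function.update_of_ne hk] at this
    exact le_antisymm this (h1 k)
  have hj2 := h2 j
  rw [Function.update_self] at hj2
  have hj1 := h1 j
  have veq : v j = u j → v = u := by
    intro h; funext k
    rcases eq_or_ne k j with rfl | hk
    · exact h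
    · exact hoff k hk
  have vequp : v j = tval u j → v = Function.update u j (tval u j) := by
    intro h; funext k
    rcases eq_or_ne k j with rfl | hk
    · rw [Function.update_self]; exact h
    · rw [Function.update_of_ne hk]; exact hoff k hk
  by_cases hc : u j = 0 ∧ ∀ i, i < j → u i ≠ 0
  · rw [tval, if_pos hc] at hj2 vequp ⊢
    rcases fin3_cases (v j) with h0 | h1' | h2'
    · exact Or.inl (veq (by rw [h0, hc.1]))
    · exact Or.inr (vequp h1')
    · exfalso; rw [h2'] at hj2; exact (by decide : ¬(2:Fin 3) ≤ 1) hj2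
  · rw [tval, if_neg hc] at hj2 vequp ⊢
    rcases fin3_cases (u j) with h0 | h1'' | h2''
    · have hex : ∃ i, i < j ∧ u i = 0 := by
        by_contra hno
        push_neg at hno
        exact hc ⟨h0, hno⟩
      obtain ⟨i, hij, hi0⟩ := hex
      rcases fin3_cases (v j) with hv0 | hv1 | hv2
      · exact Or.inl (veq (by rw [hv0, h0]))
      · exfalso
        have : v i = 0 := by rw [hoff i (Fin.ne_of_lt hij), hi0]
        exact hv.2 i j hij this hv1
      · exact Or.inr (vequp hv2)
    · rcases fin3_cases (v j) with hv0 | hv1 | hv2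
      · exfalso; rw [h1'', hv0] at hj1; exact (by decide : ¬(1:Fin 3) ≤ 0) hj1
      · exact Or.inl (veq (by rw [hv1, h1'']))
      · exact Or.inr (vequp hv2)
    · refine Or.inl (veq ?_)
      rw [h2''] at hj1 ⊢
      rcases fin3_cases (v j) with hv0 | hv1 | hv2
      · rw [hv0] at hj1; exact absurd hj1 (by decide : ¬(2:Fin 3) ≤ 0)
      · rw [hv1] at hj1; exact absurd hj1 (by decide : ¬(2:Fin 3) ≤ 1)
      · exact hv2


lemma tval_ne {u : Fin n → Fin 3} {j : Fin n} (h : u j ≠ 2) : tval u j ≠ u j :=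
  (tval_gt h).ne'

lemma up_cover {u : Fin n → Fin 3} (hu : IsTriword u) {j : Fin n} (hj : UpE u j) :
    (⟨u, hu⟩ : Triword n) ⋖ ⟨Function.update u j (tval u j), up_triword hu hj⟩ := by
  constructor
  · exact Subtype.mk_lt_mk.2 (up_lt hj.1)
  · rintro ⟨v, hv⟩ h1 h2
    rw [Subtype.mk_lt_mk] at h1 h2
    rcases up_mid hu hv h1.le h2.le with rfl | rfl
    · exact lt_irrefl _ h1
    · exact lt_irrefl _ h2

lemma up_classify {u w : Fin n → Fin 3} (hu : IsTriword u) (hw : IsTriword w)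
    (hlt : u < w) : ∃ j, UpE u j ∧ Function.update u j (tval u j) ≤ w := by
  classical
  have hle : u ≤ w := hlt.le
  have hne : u ≠ w := hlt.ne
  set S : Finset (Fin n) := Finset.univ.filter (fun k => u k ≠ w k) with hS
  have hSne : S.Nonempty := by
    by_contra h
    rw [Finset.not_nonempty_iff_eq_empty] at h
    apply hne
    funext k
    by_contra hk
    have : k ∈ S := by simp [hS, hk]
    simp [h] at this
  obtain ⟨j, hjS, hjmin⟩ : ∃ j ∈ S, ∀ k ∈ S, j ≤ k :=
    ⟨S.min' hSne, S.min'_mem hSne, fun k hk => S.min'_le k hk⟩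
  have hjne : u j ≠ w j := by
    have := hjS; simp [hS] at this; exact this
  have hjlt : u j < w j := lt_of_le_of_ne (hle j) hjne
  have hbefore : ∀ k, k < j → u k = w k := by
    intro k hk
    by_contra hne'
    have : k ∈ S := by simp [hS, hne']
    exact absurd (hjmin k this) (not_le.2 hk)
  have huj2 : u j ≠ 2 := by
    intro h; rw [h] at hjlt; omega
  refine ⟨j, ⟨huj2, ?_⟩, ?_⟩
  · rintro ⟨hj1, hj0⟩
    have hwj : w j = 2 := by rw [hj1] at hjlt; omega
    exact hw.1 j hj0 hwj
  · intro k
    rcases eq_or_ne k j with heq | hk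
    swap
    · rw [Function.update_of_ne hk]; exact hle k
    subst heq
    rw [Function.update_self]
    by_cases hc : u k = 0 ∧ ∀ i, i < k → u i ≠ 0
    · rw [tval, if_pos hc]
      rw [hc.1] at hjlt
      rcases fin3_cases (w k) with h|h|h
      · rw [h] at hjlt; exact absurd hjlt (by decide : ¬(0:Fin 3) < 0)
      · rw [h]
      · rw [h]; exact (by decide : (1:Fin 3) ≤ 2)
    · rw [tval, if_neg hc]
      rcases fin3_cases (u k) with h0 | h1 | h2
      · have hex : ∃ i, i < k ∧ u i = 0 := by
          by_contra hno
          push_neg at hno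
          exact hc ⟨h0, hno⟩
        obtain ⟨i, hik, hi0⟩ := hex
        have hwi : w i = 0 := by rw [← hbefore i hik, hi0]
        have hne1 : w k ≠ 1 := hw.2 i k hik hwi
        rcases fin3_cases (w k) with h|h|h
        · rw [h0, h] at hjlt; exact absurd hjlt (by decide : ¬(0:Fin 3) < 0)
        · exact absurd h hne1
        · rw [h]
      · rw [h1] at hjlt
        rcases fin3_cases (w k) with h|h|h
        · rw [h] at hjlt; exact absurd hjlt (by decide : ¬(1:Fin 3) < 0)
        · rw [h] at hjlt; exact absurd hjlt (by decide : ¬(1:Fin 3) < 1)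
        · rw [h]
      · exact absurd h2 huj2


lemma card_up (u : Triword n) :
    Nat.card {w : Triword n // u ⋖ w} = (Finset.univ.filter (UpE u.1)).card := by
  classical
  have hb : Function.Bijective
      (fun j : {j : Fin n // UpE u.1 j} =>
        (⟨⟨Function.update u.1 j.1 (tval u.1 j.1), up_triword u.2 j.2⟩,
          up_cover u.2 j.2⟩ : {w : Triword n // u ⋖ w})) := by
    constructor
    · rintro ⟨j1, hj1⟩ ⟨j2, hj2⟩ h
      simp only [Subtype.mk.injEq] at h ⊢
      by_contra hne
      have h1 := congrFun h j1
      rw [Function.update_self, Function.update_of_ne hne] at h1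
      exact tval_ne hj1.1 h1
    · rintro ⟨⟨w, hw⟩, hcov⟩
      have hlt : u.1 < w := Subtype.coe_lt_coe.2 hcov.1
      obtain ⟨j, hj, hle⟩ := up_classify u.2 hw hlt
      refine ⟨⟨j, hj⟩, ?_⟩
      simp only [Subtype.mk.injEq]
      have hv := up_triword u.2 hj
      have hlt2 : u < (⟨Function.update u.1 j (tval u.1 j), hv⟩ : Triword n) :=
        Subtype.coe_lt_coe.1 (by simpa using up_lt hj.1)
      by_contra hne
      have : (⟨Function.update u.1 j (tval u.1 j), hv⟩ : Triword n) < ⟨w, hw⟩ :=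
        Subtype.coe_lt_coe.1 (lt_of_le_of_ne hle hne)
      exact hcov.2 hlt2 this
  rw [Nat.card_congr (Equiv.ofBijective _ hb).symm, Nat.card_eq_fintype_card,
    Fintype.card_subtype]


lemma sval_lt {u : Fin n → Fin 3} {j : Fin n} (h : DnE u j) : sval u j < u j := by
  unfold sval; split
  · next hc => rw [hc.1]; decide
  · rcases h with h2 | ⟨h1, _⟩
    · rw [h2]; decide
    · rw [h1]; decide

lemma sval_ne {u : Fin n → Fin 3} {j : Fin n} (h : DnE u j) : sval u j ≠ u j :=
  (sval_lt h).ne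

lemma dn_lt {u : Fin n → Fin 3} {j : Fin n} (h : DnE u j) :
    Function.update u j (sval u j) < u := by
  rw [Pi.lt_def]
  refine ⟨fun k => ?_, j, ?_⟩
  · rcases eq_or_ne k j with rfl | hk
    · rw [Function.update_self]; exact (sval_lt h).le
    · rw [Function.update_of_ne hk]
  · rw [Function.update_self]; exact sval_lt h

lemma dn_triword {u : Fin n → Fin 3} (hu : IsTriword u) {j : Fin n} (hj : DnE u j) :
    IsTriword (Function.update u j (sval u j)) := by
  by_cases hc : u j = 2 ∧ ∀ i, i < j → u i ≠ 0
  · rw [sval, if_pos hc]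
    constructor
    · intro i hi
      rcases eq_or_ne i j with rfl | hij
      · rw [Function.update_self]; decide
      · rw [Function.update_of_ne hij]; exact hu.1 i hi
    · intro i k hik hi0
      rcases eq_or_ne i j with rfl | hij
      · rw [Function.update_self] at hi0; exact absurd hi0 (by decide)
      · rw [Function.update_of_ne hij] at hi0
        rcases eq_or_ne k j with rfl | hkj
        · exact absurd hi0 (hc.2 i hik)
        · rw [Function.update_of_ne hkj]; exact hu.2 i k hik hi0
  · rw [sval, if_neg hc]
    constructor
    · intro i hi
      rcases eq_or_ne i j with rfl | hij
      · rw [Function.update_self]; decide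
      · rw [Function.update_of_ne hij]; exact hu.1 i hi
    · intro i k hik hi0
      rcases eq_or_ne k j with rfl | hkj
      · rw [Function.update_self]; decide
      · rw [Function.update_of_ne hkj]
        rcases eq_or_ne i j with rfl | hij
        · -- i = j, u k must not be 1 for k > j
          rcases hj with h2 | ⟨h1, hno1⟩
          · have hex : ∃ i0, i0 < i ∧ u i0 = 0 := by
              by_contra hno
              push_neg at hno
              exact hc ⟨h2, hno⟩
            obtain ⟨i0, hi0i, hi00⟩ := hex
            exact hu.2 i0 k (hi0i.trans hik) hi00
          · exact hno1 k hik
        · rw [Function.update_of_ne hij] at hi0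
          exact hu.2 i k hik hi0

lemma dn_mid {u : Fin n → Fin 3} (hu : IsTriword u) {j : Fin n} (hj : DnE u j)
    {v : Fin n → Fin 3} (hv : IsTriword v)
    (h1 : Function.update u j (sval u j) ≤ v) (h2 : v ≤ u) :
    v = Function.update u j (sval u j) ∨ v = u := by
  have hoff : ∀ k, k ≠ j → v k = u k := by
    intro k hk
    have := h1 k
    rw [Function.update_of_ne hk] at this
    exact le_antisymm (h2 k) this
  have hj1 := h1 j
  rw [Function.update_self] at hj1
  have hj2 := h2 j
  have veq : v j = u j → v = u := by
    intro h; funext k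
    rcases eq_or_ne k j with rfl | hk
    · exact h
    · exact hoff k hk
  have veqdn : v j = sval u j → v = Function.update u j (sval u j) := by
    intro h; funext k
    rcases eq_or_ne k j with rfl | hk
    · rw [Function.update_self]; exact h
    · rw [Function.update_of_ne hk]; exact hoff k hk
  by_cases hc : u j = 2 ∧ ∀ i, i < j → u i ≠ 0
  · rw [sval, if_pos hc] at hj1 veqdn ⊢
    rcases fin3_cases (v j) with h0 | h1' | h2'
    · exfalso; rw [h0] at hj1; exact (by decide : ¬(1:Fin 3) ≤ 0) hj1
    · exact Or.inl (veqdn h1')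
    · exact Or.inr (veq (by rw [h2', hc.1]))
  · rw [sval, if_neg hc] at hj1 veqdn ⊢
    rcases hj with h2'' | ⟨h1'', _⟩
    · have hex : ∃ i, i < j ∧ u i = 0 := by
        by_contra hno
        push_neg at hno
        exact hc ⟨h2'', hno⟩
      obtain ⟨i, hij, hi0⟩ := hex
      rcases fin3_cases (v j) with hv0 | hv1 | hv2
      · exact Or.inl (veqdn hv0)
      · exfalso
        have : v i = 0 := le_antisymm (hi0 ▸ h2 i) (Fin.zero_le _)
        exact hv.2 i j hij this hv1
      · exact Or.inr (veq (by rw [hv2, h2'']))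
    · rcases fin3_cases (v j) with hv0 | hv1 | hv2
      · exact Or.inl (veqdn hv0)
      · exact Or.inr (veq (by rw [hv1, h1'']))
      · exfalso; rw [hv2, h1''] at hj2; exact (by decide : ¬(2:Fin 3) ≤ 1) hj2

lemma dn_cover {u : Fin n → Fin 3} (hu : IsTriword u) {j : Fin n} (hj : DnE u j) :
    (⟨Function.update u j (sval u j), dn_triword hu hj⟩ : Triword n) ⋖ ⟨u, hu⟩ := by
  constructor
  · exact Subtype.mk_lt_mk.2 (dn_lt hj)
  · rintro ⟨v, hv⟩ h1 h2
    rw [Subtype.mk_lt_mk] at h1 h2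
    rcases dn_mid hu hj hv h1.le h2.le with rfl | rfl
    · exact lt_irrefl _ h1
    · exact lt_irrefl _ h2

lemma dn_classify {u v : Fin n → Fin 3} (hu : IsTriword u) (hv : IsTriword v)
    (hlt : v < u) : ∃ j, DnE u j ∧ v ≤ Function.update u j (sval u j) := by
  classical
  have hle : v ≤ u := hlt.le
  have hne : v ≠ u := hlt.ne
  set S : Finset (Fin n) := Finset.univ.filter (fun k => v k ≠ u k) with hS
  have hSne : S.Nonempty := by
    by_contra h
    rw [Finset.not_nonempty_iff_eq_empty] at h
    apply hne
    funext k
    by_contra hk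
    have : k ∈ S := by simp [hS, hk]
    simp [h] at this
  obtain ⟨j, hjS, hjmax⟩ : ∃ j ∈ S, ∀ k ∈ S, k ≤ j :=
    ⟨S.max' hSne, S.max'_mem hSne, fun k hk => S.le_max' k hk⟩
  have hjne : v j ≠ u j := by
    have := hjS; simp [hS] at this; exact this
  have hjlt : v j < u j := lt_of_le_of_ne (hle j) hjne
  have hafter : ∀ k, j < k → v k = u k := by
    intro k hk
    by_contra hne'
    have : k ∈ S := by simp [hS, hne']
    exact absurd (hjmax k this) (not_le.2 hk)
  have hdne : DnE u j := by
    rcases fin3_cases (u j) with h0 | h1 | h2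
    · exfalso; rw [h0] at hjlt; exact absurd hjlt (not_lt.2 (Fin.zero_le _))
    · right
      refine ⟨h1, fun k hjk hk1 => ?_⟩
      have hvk : v k = 1 := by rw [hafter k hjk, hk1]
      have hvj : v j = 0 := by rw [h1] at hjlt; omega
      exact hv.2 j k hjk hvj hvk
    · exact Or.inl h2
  refine ⟨j, hdne, fun k => ?_⟩
  rcases eq_or_ne k j with heq | hk
  swap
  · rw [Function.update_of_ne hk]; exact hle k
  subst heq
  rw [Function.update_self]
  by_cases hc : u k = 2 ∧ ∀ i, i < k → u i ≠ 0
  · rw [sval, if_pos hc]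
    rw [hc.1] at hjlt
    rcases fin3_cases (v k) with h|h|h
    · exact le_trans (le_of_eq h) (by decide : (0:Fin 3) ≤ 1)
    · exact le_of_eq h
    · rw [h] at hjlt; exact absurd hjlt (by decide : ¬(2:Fin 3) < 2)
  · rw [sval, if_neg hc]
    rcases fin3_cases (u k) with h0 | h1 | h2
    · exfalso; rw [h0] at hjlt; exact absurd hjlt (not_lt.2 (Fin.zero_le _))
    · rw [h1] at hjlt
      rcases fin3_cases (v k) with h|h|h
      · exact le_of_eq h
      · rw [h] at hjlt; exact absurd hjlt (by decide : ¬(1:Fin 3) < 1)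
      · rw [h] at hjlt; exact absurd hjlt (by decide : ¬(2:Fin 3) < 1)
    · have hex : ∃ i, i < k ∧ u i = 0 := by
        by_contra hno
        push_neg at hno
        exact hc ⟨h2, hno⟩
      obtain ⟨i, hik, hi0⟩ := hex
      have hvi : v i = 0 := le_antisymm (hi0 ▸ hle i) (Fin.zero_le _)
      rcases fin3_cases (v k) with h|h|h
      · exact le_of_eq h
      · exact absurd h (hv.2 i k hik hvi)
      · rw [h2, h] at hjlt; exact absurd hjlt (by decide : ¬(2:Fin 3) < 2)

lemma card_dn (u : Triword n) :
    Nat.card {w : Triword n // w ⋖ u} = (Finset.univ.filter (DnE u.1)).card := by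
  classical
  have hb : Function.Bijective
      (fun j : {j : Fin n // DnE u.1 j} =>
        (⟨⟨Function.update u.1 j.1 (sval u.1 j.1), dn_triword u.2 j.2⟩,
          dn_cover u.2 j.2⟩ : {w : Triword n // w ⋖ u})) := by
    constructor
    · rintro ⟨j1, hj1⟩ ⟨j2, hj2⟩ h
      simp only [Subtype.mk.injEq] at h ⊢
      by_contra hne
      have h1 := congrFun h j1
      rw [Function.update_self, Function.update_of_ne hne] at h1
      exact sval_ne hj1 h1
    · rintro ⟨⟨w, hw⟩, hcov⟩
      have hlt : w < u.1 := Subtype.coe_lt_coe.2 hcov.1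
      obtain ⟨j, hj, hle⟩ := dn_classify u.2 hw hlt
      refine ⟨⟨j, hj⟩, ?_⟩
      simp only [Subtype.mk.injEq]
      have hv := dn_triword u.2 hj
      have hlt2 : (⟨Function.update u.1 j (sval u.1 j), hv⟩ : Triword n) < u :=
        Subtype.coe_lt_coe.1 (by simpa using dn_lt hj)
      by_contra hne
      have : (⟨w, hw⟩ : Triword n) < ⟨Function.update u.1 j (sval u.1 j), hv⟩ :=
        Subtype.coe_lt_coe.1 (lt_of_le_of_ne hle (fun hh => hne hh.symm))
      exact hcov.2 this hlt2
  rw [Nat.card_congr (Equiv.ofBijective _ hb).symm, Nat.card_eq_fintype_card,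
    Fintype.card_subtype]


/-! ### statistics -/

def c2 (u : Fin n → Fin 3) : ℕ := (Finset.univ.filter fun j => u j = 2).card

def dd (u : Fin n → Fin 3) : ℕ := (Finset.univ.filter fun j => u j ≠ 2).card

def eps (u : Fin n → Fin 3) : ℕ := if ∃ j, u j = 1 then 1 else 0

lemma card_DnE (u : Fin n → Fin 3) :
    (Finset.univ.filter (DnE u)).card = c2 u + eps u := by
  classical
  have h1 : Finset.univ.filter (DnE u) =
      (Finset.univ.filter fun j => u j = 2) ∪
      (Finset.univ.filter fun j => u j = 1 ∧ ∀ k, j < k → u k ≠ 1) := by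
    rw [← Finset.filter_or]
    rfl
  rw [h1, Finset.card_union_of_disjoint, ← c2]
  · congr 1
    by_cases hex : ∃ j, u j = 1
    · rw [eps, if_pos hex]
      set S : Finset (Fin n) := Finset.univ.filter (fun j => u j = 1) with hS
      have hSne : S.Nonempty := by
        obtain ⟨j, hj⟩ := hex
        exact ⟨j, by simp [hS, hj]⟩
      have : (Finset.univ.filter fun j => u j = 1 ∧ ∀ k, j < k → u k ≠ 1) =
          {S.max' hSne} := by
        rw [Finset.eq_singleton_iff_unique_mem]
        constructor
        · simp only [Finset.mem_filter, Finset.mem_univ, true_and]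
          constructor
          · have := S.max'_mem hSne
            simp [hS] at this
            exact this
          · intro k hk hk1
            have hkS : k ∈ S := by simp [hS, hk1]
            exact absurd (S.le_max' k hkS) (not_le.2 hk)
        · intro x hx
          simp only [Finset.mem_filter, Finset.mem_univ, true_and] at hx
          have hxS : x ∈ S := by simp [hS, hx.1]
          refine le_antisymm (S.le_max' x hxS) ?_
          by_contra hlt
          push_neg at hlt
          have := S.max'_mem hSne
          simp [hS] at this
          exact hx.2 _ hlt this
      rw [this, Finset.card_singleton]
    · rw [eps, if_neg hex]
      rw [Finset.card_eq_zero, Finset.filter_eq_empty_iff]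
      intro j _
      push_neg at hex
      intro hj
      exact hex j hj.1
  · rw [Finset.disjoint_filter]
    intro j _ hj2 hj
    rw [hj.1] at hj2
    exact absurd hj2 (by decide)

/-! ### cons decompositions -/

def NoZO (u : Fin n → Fin 3) : Prop := ∀ i j, i < j → u i = 0 → u j ≠ 1

def No1 (u : Fin n → Fin 3) : Prop := ∀ j, u j ≠ 1

instance : DecidablePred (@NoZO n) := fun u => by unfold NoZO; infer_instance
instance : DecidablePred (@No1 n) := fun u => by unfold No1; infer_instance

lemma no1_noZO {u : Fin n → Fin 3} (h : No1 u) : NoZO u :=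
  fun _ j _ _ => h j

variable {m : ℕ}

lemma noZO_cons (a : Fin 3) (w : Fin m → Fin 3) :
    NoZO (Fin.cons a w) ↔ NoZO w ∧ (a = 0 → No1 w) := by
  constructor
  · intro h
    refine ⟨fun i j hij hi0 => ?_, fun ha j => ?_⟩
    · have := h i.succ j.succ (by rwa [Fin.succ_lt_succ_iff]) (by rwa [Fin.cons_succ])
      rwa [Fin.cons_succ] at this
    · have := h 0 j.succ (Fin.succ_pos j) (by rwa [Fin.cons_zero])
      rwa [Fin.cons_succ] at this
  · rintro ⟨h1, h2⟩ i j hij hi0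
    rcases Fin.eq_zero_or_eq_succ j with rfl | ⟨j', rfl⟩
    · exact absurd hij (by simp)
    · rw [Fin.cons_succ]
      rcases Fin.eq_zero_or_eq_succ i with rfl | ⟨i', rfl⟩
      · rw [Fin.cons_zero] at hi0
        exact h2 hi0 j'
      · rw [Fin.cons_succ] at hi0
        exact h1 i' j' (Fin.succ_lt_succ_iff.1 hij) hi0

lemma triword_iff (u : Fin n → Fin 3) :
    IsTriword u ↔ (∀ i : Fin n, (i : ℕ) = 0 → u i ≠ 2) ∧ NoZO u := Iff.rfl

lemma triword_cons (a : Fin 3) (w : Fin m → Fin 3) :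
    IsTriword (Fin.cons a w) ↔ a ≠ 2 ∧ NoZO w ∧ (a = 0 → No1 w) := by
  rw [triword_iff, noZO_cons]
  refine and_congr_left' ⟨fun h1 => ?_, fun h1 i hi => ?_⟩
  · have := h1 0 rfl
    rwa [Fin.cons_zero] at this
  · have : i = 0 := Fin.ext hi
    subst this
    rwa [Fin.cons_zero]

lemma c2_cons (a : Fin 3) (w : Fin m → Fin 3) :
    c2 (Fin.cons a w) = (if a = 2 then 1 else 0) + c2 w := by
  unfold c2
  rw [Finset.card_filter, Finset.card_filter, Fin.sum_univ_succ]
  simp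

lemma dd_cons (a : Fin 3) (w : Fin m → Fin 3) :
    dd (Fin.cons a w) = (if a = 2 then 0 else 1) + dd w := by
  unfold dd
  rw [Finset.card_filter, Finset.card_filter, Fin.sum_univ_succ]
  simp only [Fin.cons_zero, Fin.cons_succ]
  congr 1
  by_cases h : a = 2 <;> simp [h]

lemma eps_cons (a : Fin 3) (w : Fin m → Fin 3) :
    eps (Fin.cons a w) = if a = 1 then 1 else eps w := by
  unfold eps
  simp only [Fin.exists_fin_succ, Fin.cons_zero, Fin.cons_succ]
  by_cases h : a = 1 <;> simp [h]

lemma upcard_cons (a : Fin 3) (w : Fin m → Fin 3) :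
    (Finset.univ.filter (UpE (Fin.cons a w))).card = (if a = 0 then 1 else 0) + dd w := by
  have h0 : UpE (Fin.cons a w) 0 ↔ a = 0 := by
    unfold UpE
    rw [Fin.cons_zero]
    rcases fin3_cases a with rfl | rfl | rfl <;> simp
  have hs : ∀ i : Fin m, UpE (Fin.cons a w) i.succ ↔ w i ≠ 2 := by
    intro i
    unfold UpE
    rw [Fin.cons_succ]
    simp [Fin.val_succ]
  rw [Finset.card_filter, Fin.sum_univ_succ]
  unfold dd
  rw [Finset.card_filter]
  congr 1
  · simp [h0]
  · refine Finset.sum_congr rfl fun i _ => ?_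
    simp [hs i]


/-! ### sums -/

lemma sum_cons_split {M : Type*} [AddCommMonoid M] (f : (Fin (m + 1) → Fin 3) → M) :
    ∑ u : Fin (m + 1) → Fin 3, f u = ∑ a : Fin 3, ∑ w : Fin m → Fin 3, f (Fin.cons a w) := by
  rw [← Equiv.sum_comp (Fin.consEquiv (fun _ => Fin 3)) f, Fintype.sum_prod_type]
  rfl

noncomputable def As (m : ℕ) : MvPolynomial (Fin 2) ℤ :=
  ∑ w : Fin m → Fin 3, if No1 w then X 0 ^ c2 w * X 1 ^ dd w else 0

noncomputable def Qs (m : ℕ) : MvPolynomial (Fin 2) ℤ :=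
  ∑ w : Fin m → Fin 3, if NoZO w then X 0 ^ c2 w * X 1 ^ dd w else 0

lemma no1_cons (a : Fin 3) (w : Fin m → Fin 3) :
    No1 (Fin.cons a w) ↔ a ≠ 1 ∧ No1 w := by
  constructor
  · intro h
    refine ⟨by have := h 0; rwa [Fin.cons_zero] at this, fun j => ?_⟩
    have := h j.succ; rwa [Fin.cons_succ] at this
  · rintro ⟨h1, h2⟩ j
    rcases Fin.eq_zero_or_eq_succ j with rfl | ⟨j', rfl⟩
    · rwa [Fin.cons_zero]
    · rw [Fin.cons_succ]; exact h2 j'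

lemma As_zero : As 0 = 1 := by
  rw [As, Fintype.sum_unique]
  simp [No1, c2, dd]

lemma Qs_zero : Qs 0 = 1 := by
  rw [Qs, Fintype.sum_unique]
  simp [NoZO, c2, dd]

lemma As_succ : As (m + 1) = (X 0 + X 1) * As m := by
  rw [As, sum_cons_split, Fin.sum_univ_three]
  have e0 : ∀ w : Fin m → Fin 3,
      (if No1 (Fin.cons 0 w) then X 0 ^ c2 (Fin.cons 0 w) * X 1 ^ dd (Fin.cons 0 w) else 0)
        = X 1 * (if No1 w then (X 0 : MvPolynomial (Fin 2) ℤ) ^ c2 w * X 1 ^ dd w else 0) := by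
    intro w
    by_cases h : No1 w
    · rw [if_pos ((no1_cons _ w).2 ⟨by decide, h⟩), if_pos h, c2_cons, dd_cons,
        if_neg (by decide : ¬(0:Fin 3) = 2), if_neg (by decide : ¬(0:Fin 3) = 2)]
      ring
    · rw [if_neg (fun hh => h ((no1_cons _ w).1 hh).2), if_neg h, mul_zero]
  have e1 : ∀ w : Fin m → Fin 3,
      (if No1 (Fin.cons 1 w) then X 0 ^ c2 (Fin.cons 1 w) * X 1 ^ dd (Fin.cons 1 w) else 0)
        = (0 : MvPolynomial (Fin 2) ℤ) := by
    intro w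
    rw [if_neg (fun hh => ((no1_cons _ w).1 hh).1 rfl)]
  have e2 : ∀ w : Fin m → Fin 3,
      (if No1 (Fin.cons 2 w) then X 0 ^ c2 (Fin.cons 2 w) * X 1 ^ dd (Fin.cons 2 w) else 0)
        = X 0 * (if No1 w then (X 0 : MvPolynomial (Fin 2) ℤ) ^ c2 w * X 1 ^ dd w else 0) := by
    intro w
    by_cases h : No1 w
    · rw [if_pos ((no1_cons _ w).2 ⟨by decide, h⟩), if_pos h, c2_cons, dd_cons,
        if_pos (rfl : (2:Fin 3) = 2), if_pos (rfl : (2:Fin 3) = 2)]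
      ring
    · rw [if_neg (fun hh => h ((no1_cons _ w).1 hh).2), if_neg h, mul_zero]
  rw [Finset.sum_congr rfl (fun w _ => e0 w), Finset.sum_congr rfl (fun w _ => e1 w),
    Finset.sum_congr rfl (fun w _ => e2 w), ← Finset.mul_sum, ← Finset.mul_sum, ← As]
  simp only [Finset.sum_const_zero, add_zero]
  ring

lemma Qs_succ : Qs (m + 1) = (X 0 + X 1) * Qs m + X 1 * As m := by
  rw [Qs, sum_cons_split, Fin.sum_univ_three]
  have e0 : ∀ w : Fin m → Fin 3,
      (if NoZO (Fin.cons 0 w) then X 0 ^ c2 (Fin.cons 0 w) * X 1 ^ dd (Fin.cons 0 w) else 0)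
        = X 1 * (if No1 w then (X 0 : MvPolynomial (Fin 2) ℤ) ^ c2 w * X 1 ^ dd w else 0) := by
    intro w
    by_cases h : No1 w
    · rw [if_pos ((noZO_cons _ w).2 ⟨no1_noZO h, fun _ => h⟩), if_pos h, c2_cons, dd_cons,
        if_neg (by decide : ¬(0:Fin 3) = 2), if_neg (by decide : ¬(0:Fin 3) = 2)]
      ring
    · rw [if_neg (fun hh => h (((noZO_cons _ w).1 hh).2 rfl)), if_neg h, mul_zero]
  have e1 : ∀ w : Fin m → Fin 3,
      (if NoZO (Fin.cons 1 w) then X 0 ^ c2 (Fin.cons 1 w) * X 1 ^ dd (Fin.cons 1 w) else 0)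
        = X 1 * (if NoZO w then (X 0 : MvPolynomial (Fin 2) ℤ) ^ c2 w * X 1 ^ dd w else 0) := by
    intro w
    by_cases h : NoZO w
    · rw [if_pos ((noZO_cons _ w).2 ⟨h, fun hh => absurd hh (by decide)⟩), if_pos h,
        c2_cons, dd_cons, if_neg (by decide : ¬(1:Fin 3) = 2), if_neg (by decide : ¬(1:Fin 3) = 2)]
      ring
    · rw [if_neg (fun hh => h ((noZO_cons _ w).1 hh).1), if_neg h, mul_zero]
  have e2 : ∀ w : Fin m → Fin 3,
      (if NoZO (Fin.cons 2 w) then X 0 ^ c2 (Fin.cons 2 w) * X 1 ^ dd (Fin.cons 2 w) else 0)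
        = X 0 * (if NoZO w then (X 0 : MvPolynomial (Fin 2) ℤ) ^ c2 w * X 1 ^ dd w else 0) := by
    intro w
    by_cases h : NoZO w
    · rw [if_pos ((noZO_cons _ w).2 ⟨h, fun hh => absurd hh (by decide)⟩), if_pos h,
        c2_cons, dd_cons, if_pos (rfl : (2:Fin 3) = 2), if_pos (rfl : (2:Fin 3) = 2)]
      ring
    · rw [if_neg (fun hh => h ((noZO_cons _ w).1 hh).1), if_neg h, mul_zero]
  rw [Finset.sum_congr rfl (fun w _ => e0 w), Finset.sum_congr rfl (fun w _ => e1 w),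
    Finset.sum_congr rfl (fun w _ => e2 w), ← Finset.mul_sum, ← Finset.mul_sum,
    ← Finset.mul_sum, ← As, ← Qs]
  ring

lemma As_formula (m : ℕ) : As m = (X 0 + X 1) ^ m := by
  induction m with
  | zero => rw [As_zero, pow_zero]
  | succ k ih => rw [As_succ, ih, pow_succ]; ring

lemma Qs_formula (m : ℕ) (hm : 1 ≤ m) :
    Qs m = (X 0 + X 1) ^ (m - 1) * (X 0 + ((m : MvPolynomial (Fin 2) ℤ) + 1) * X 1) := by
  induction m, hm using Nat.le_induction with
  | base =>
    rw [Qs_succ, Qs_zero, As_zero]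
    push_cast
    ring
  | succ k hk ih =>
    rw [Qs_succ, ih, As_formula]
    have hk1 : k + 1 - 1 = (k - 1) + 1 := by omega
    have hk2 : (X 0 + X 1 : MvPolynomial (Fin 2) ℤ) ^ k
        = (X 0 + X 1) ^ (k - 1) * (X 0 + X 1) := by
      have := pow_succ (X 0 + X 1 : MvPolynomial (Fin 2) ℤ) (k - 1)
      rw [Nat.sub_add_cancel hk] at this
      exact this
    rw [hk1, hk2]
    push_cast
    ring


lemma eps_eq_zero {u : Fin n → Fin 3} (h : No1 u) : eps u = 0 := by
  rw [eps, if_neg]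
  rintro ⟨j, hj⟩
  exact h j hj

lemma F_step (m : ℕ) :
    (∑ u : Fin (m + 1) → Fin 3, if IsTriword u then
        (X 0 : MvPolynomial (Fin 2) ℤ) ^ (c2 u + eps u) *
          X 1 ^ (Finset.univ.filter (UpE u)).card
      else 0)
    = X 1 * As m + X 0 * Qs m := by
  rw [sum_cons_split, Fin.sum_univ_three]
  have e0 : ∀ w : Fin m → Fin 3,
      (if IsTriword (Fin.cons 0 w) then
        (X 0 : MvPolynomial (Fin 2) ℤ) ^ (c2 (Fin.cons 0 w) + eps (Fin.cons 0 w)) *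
          X 1 ^ (Finset.univ.filter (UpE (Fin.cons 0 w))).card else 0)
      = X 1 * (if No1 w then (X 0 : MvPolynomial (Fin 2) ℤ) ^ c2 w * X 1 ^ dd w else 0) := by
    intro w
    by_cases h : No1 w
    · rw [if_pos ((triword_cons _ w).2 ⟨by decide, no1_noZO h, fun _ => h⟩), if_pos h,
        c2_cons, eps_cons, upcard_cons,
        if_neg (by decide : ¬(0:Fin 3) = 2), if_neg (by decide : ¬(0:Fin 3) = 1),
        if_pos (rfl : (0:Fin 3) = 0), eps_eq_zero h]
      ring
    · rw [if_neg (fun hh => h (((triword_cons _ w).1 hh).2.2 rfl)), if_neg h, mul_zero]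
  have e1 : ∀ w : Fin m → Fin 3,
      (if IsTriword (Fin.cons 1 w) then
        (X 0 : MvPolynomial (Fin 2) ℤ) ^ (c2 (Fin.cons 1 w) + eps (Fin.cons 1 w)) *
          X 1 ^ (Finset.univ.filter (UpE (Fin.cons 1 w))).card else 0)
      = X 0 * (if NoZO w then (X 0 : MvPolynomial (Fin 2) ℤ) ^ c2 w * X 1 ^ dd w else 0) := by
    intro w
    by_cases h : NoZO w
    · rw [if_pos ((triword_cons _ w).2 ⟨by decide, h, fun hh => absurd hh (by decide)⟩),
        if_pos h, c2_cons, eps_cons, upcard_cons,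
        if_neg (by decide : ¬(1:Fin 3) = 2), if_pos (rfl : (1:Fin 3) = 1),
        if_neg (by decide : ¬(1:Fin 3) = 0)]
      ring
    · rw [if_neg (fun hh => h ((triword_cons _ w).1 hh).2.1), if_neg h, mul_zero]
  have e2 : ∀ w : Fin m → Fin 3,
      (if IsTriword (Fin.cons 2 w) then
        (X 0 : MvPolynomial (Fin 2) ℤ) ^ (c2 (Fin.cons 2 w) + eps (Fin.cons 2 w)) *
          X 1 ^ (Finset.univ.filter (UpE (Fin.cons 2 w))).card else 0)
      = (0 : MvPolynomial (Fin 2) ℤ) := by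
    intro w
    rw [if_neg (fun hh => ((triword_cons _ w).1 hh).1 rfl)]
  rw [Finset.sum_congr rfl (fun w _ => e0 w), Finset.sum_congr rfl (fun w _ => e1 w),
    Finset.sum_congr rfl (fun w _ => e2 w), ← Finset.mul_sum, ← Finset.mul_sum, ← As, ← Qs]
  simp only [Finset.sum_const_zero, add_zero]

end HP

/-- The degree polynomial `∑_u x^(in u) y^(out u)` of the Hochschild lattice of
size `n ≥ 2` equals `(x+y)^(n-2) (x² + (n+1) x y + y²)`
(here `x = X 0`, `y = X 1`). -/
theorem degree_polynomial (n : ℕ) (hn : 2 ≤ n) :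
    (∑ u : Triword n,
        (X 0 : MvPolynomial (Fin 2) ℤ) ^ Nat.card {v : Triword n // v ⋖ u} *
        (X 1) ^ Nat.card {v : Triword n // u ⋖ v}) =
      (X 0 + X 1) ^ (n - 2) *
        ((X 0) ^ 2 + ((n : MvPolynomial (Fin 2) ℤ) + 1) * X 0 * X 1 + (X 1) ^ 2) := by
  classical
  obtain ⟨k, rfl⟩ : ∃ k, n = k + 2 := ⟨n - 2, by omega⟩
  have h1 : ∀ u : Triword (k + 2),
      (X 0 : MvPolynomial (Fin 2) ℤ) ^ Nat.card {v : Triword (k + 2) // v ⋖ u} *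
        (X 1) ^ Nat.card {v : Triword (k + 2) // u ⋖ v}
      = X 0 ^ (HP.c2 u.1 + HP.eps u.1) * X 1 ^ (Finset.univ.filter (HP.UpE u.1)).card := by
    intro u
    rw [HP.card_dn, HP.card_up, HP.card_DnE]
  rw [Finset.sum_congr rfl (fun u _ => h1 u)]
  have h2 : (∑ u : Triword (k + 2),
        (X 0 : MvPolynomial (Fin 2) ℤ) ^ (HP.c2 u.1 + HP.eps u.1) *
          X 1 ^ (Finset.univ.filter (HP.UpE u.1)).card)
      = ∑ u : Fin (k + 2) → Fin 3, if IsTriword u then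
          (X 0 : MvPolynomial (Fin 2) ℤ) ^ (HP.c2 u + HP.eps u) *
            X 1 ^ (Finset.univ.filter (HP.UpE u)).card else 0 := by
    rw [← Finset.sum_filter]
    exact (Finset.sum_subtype (Finset.univ.filter IsTriword) (fun x => by simp)
      (fun u => (X 0 : MvPolynomial (Fin 2) ℤ) ^ (HP.c2 u + HP.eps u) *
        X 1 ^ (Finset.univ.filter (HP.UpE u)).card)).symm
  rw [h2]
  have h3 : k + 2 = (k + 1) + 1 := rfl
  rw [h3, HP.F_step (k + 1), HP.As_formula, HP.Qs_formula (k + 1) (by omega)]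
  have e1 : k + 1 - 1 = k := by omega
  have e2 : k + 1 + 1 - 2 = k := by omega
  rw [e1, e2, pow_succ]
  push_cast
  ring
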